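/- Suppose Σ_{i=1}^n x_i² ≍ n. If β_n ≍ 1/√n (i.e., β_n√n is bounded above and below by positive constants for large n), then the L1 distance ‖P_{n,0} − P_{n,β_n}‖ is eventually bounded away from 0 and from 2. -/

import Mathlib

/-!
For probability densities `f, g` with Hellinger affinity `A = ∫ √(f g)`, writing
`I = ∫ min f g` one has `‖f - g‖₁ = 2 - 2I`, `I ≤ A` because `min f g ≤ √(f g)`, and
`A² ≤ I (2 - I) ≤ 2I` by Cauchy–Schwarz applied to `√(f g) = √(min f g) √(max f g)`.
For Gaussian products `√(φ_μ φ_ν)` is `exp (-‖μ - ν‖² / 8)` times the Gaussian density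
centred at `(μ + ν) / 2`, so `A = exp (-β² ∑ xᵢ² / 8)`. Finally
`β_n² ∑ xᵢ² = (β_n √n)² · (∑ xᵢ² / n)` stays in a fixed compact subinterval of `(0, ∞)`,
which keeps `‖P_{n,0} - P_{n,β_n}‖` away from `0` and `2`.
-/

open MeasureTheory Real ProbabilityTheory

section HellingerAffinity

variable {α : Type*} [MeasurableSpace α] {μ : Measure α} {f g : α → ℝ}

lemma MeasureTheory.Integrable.sqrt_mul (hf : Integrable f μ) (hg : Integrable g μ) :
    Integrable (fun a => √(f a * g a)) μ := by
  refine (hf.abs.add hg.abs).mono' (by fun_prop) (ae_of_all _ fun a => ?_)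
  rw [Real.norm_of_nonneg (Real.sqrt_nonneg _), Pi.add_apply, Real.sqrt_le_iff]
  refine ⟨by positivity, ?_⟩
  nlinarith [abs_mul_abs_self (f a), abs_mul_abs_self (g a), le_abs_self (f a * g a),
    abs_mul (f a) (g a), abs_nonneg (f a), abs_nonneg (g a)]

lemma integral_abs_sub_eq_integral_max_sub_integral_min (hf : Integrable f μ)
    (hg : Integrable g μ) :
    ∫ a, |f a - g a| ∂μ = ∫ a, max (f a) (g a) ∂μ - ∫ a, min (f a) (g a) ∂μ := by
  have hmin : Integrable (fun a => min (f a) (g a)) μ := hf.inf hg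
  have hmax : Integrable (fun a => max (f a) (g a)) μ := hf.sup hg
  rw [← integral_sub hmax hmin]
  simp only [max_sub_min_eq_abs, abs_sub_comm]

lemma integral_min_add_integral_max (hf : Integrable f μ) (hg : Integrable g μ) :
    ∫ a, min (f a) (g a) ∂μ + ∫ a, max (f a) (g a) ∂μ = ∫ a, f a ∂μ + ∫ a, g a ∂μ := by
  have hmin : Integrable (fun a => min (f a) (g a)) μ := hf.inf hg
  have hmax : Integrable (fun a => max (f a) (g a)) μ := hf.sup hg
  rw [← integral_add hmin hmax, ← integral_add hf hg]
  simp only [min_add_max]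

lemma integral_min_le_integral_sqrt_mul (hf0 : 0 ≤ᵐ[μ] f) (hg0 : 0 ≤ᵐ[μ] g)
    (hf : Integrable f μ) (hg : Integrable g μ) :
    ∫ a, min (f a) (g a) ∂μ ≤ ∫ a, √(f a * g a) ∂μ := by
  have hmin : Integrable (fun a => min (f a) (g a)) μ := hf.inf hg
  refine integral_mono_ae hmin (hf.sqrt_mul hg) ?_
  filter_upwards [hf0, hg0] with a hfa hga
  rw [Real.le_sqrt (le_min hfa hga) (mul_nonneg hfa hga), sq]
  exact mul_le_mul (min_le_left _ _) (min_le_right _ _) (le_min hfa hga) hfa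

lemma sq_integral_sqrt_mul_le (hf0 : 0 ≤ᵐ[μ] f) (hg0 : 0 ≤ᵐ[μ] g)
    (hf : Integrable f μ) (hg : Integrable g μ) :
    (∫ a, √(f a * g a) ∂μ) ^ 2 ≤ (∫ a, min (f a) (g a) ∂μ) * ∫ a, max (f a) (g a) ∂μ := by
  have hmin : Integrable (fun a => min (f a) (g a)) μ := hf.inf hg
  have hmax : Integrable (fun a => max (f a) (g a)) μ := hf.sup hg
  have hmin0 : ∀ᵐ a ∂μ, 0 ≤ min (f a) (g a) := by
    filter_upwards [hf0, hg0] with a hfa hga using le_min hfa hga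
  have hmax0 : ∀ᵐ a ∂μ, 0 ≤ max (f a) (g a) := by
    filter_upwards [hf0] with a hfa using le_max_of_le_left hfa
  have hsq : ∀ {h : α → ℝ}, (∀ᵐ a ∂μ, 0 ≤ h a) →
      ∫ a, √(h a) ^ (2 : ℝ) ∂μ = ∫ a, h a ∂μ := fun h0 => by
    refine integral_congr_ae ?_
    filter_upwards [h0] with a ha
    rw [Real.rpow_two, Real.sq_sqrt ha]
  have hmemLp : ∀ {h : α → ℝ}, Integrable h μ → (∀ᵐ a ∂μ, 0 ≤ h a) →
      MemLp (fun a => √(h a)) (ENNReal.ofReal 2) μ := fun hh h0 => by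
    rw [ENNReal.ofReal_ofNat, memLp_two_iff_integrable_sq (by fun_prop)]
    refine hh.congr ?_
    filter_upwards [h0] with a ha
    rw [Real.sq_sqrt ha]
  have hprod : ∫ a, √(f a * g a) ∂μ = ∫ a, √(min (f a) (g a)) * √(max (f a) (g a)) ∂μ := by
    refine integral_congr_ae ?_
    filter_upwards [hmin0] with a ha
    rw [← Real.sqrt_mul ha, min_mul_max]
  have holder := integral_mul_le_Lp_mul_Lq_of_nonneg Real.HolderConjugate.two_two
    (ae_of_all _ fun a => Real.sqrt_nonneg _) (ae_of_all _ fun a => Real.sqrt_nonneg _)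
    (hmemLp hmin hmin0) (hmemLp hmax hmax0)
  rw [← hprod, hsq hmin0, hsq hmax0, ← Real.sqrt_eq_rpow, ← Real.sqrt_eq_rpow,
    ← Real.sqrt_mul (integral_nonneg_of_ae hmin0)] at holder
  calc (∫ a, √(f a * g a) ∂μ) ^ 2 ≤ √((∫ a, min (f a) (g a) ∂μ) * ∫ a, max (f a) (g a) ∂μ) ^ 2 :=
        pow_le_pow_left₀ (integral_nonneg fun a => Real.sqrt_nonneg _) holder 2
    _ = _ := Real.sq_sqrt (mul_nonneg (integral_nonneg_of_ae hmin0) (integral_nonneg_of_ae hmax0))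

theorem two_sub_two_mul_affinity_le_integral_abs_sub (hf0 : 0 ≤ᵐ[μ] f) (hg0 : 0 ≤ᵐ[μ] g)
    (hf : Integrable f μ) (hg : Integrable g μ) (hf1 : ∫ a, f a ∂μ = 1) (hg1 : ∫ a, g a ∂μ = 1) :
    2 - 2 * ∫ a, √(f a * g a) ∂μ ≤ ∫ a, |f a - g a| ∂μ ∧
      ∫ a, |f a - g a| ∂μ ≤ 2 - (∫ a, √(f a * g a) ∂μ) ^ 2 := by
  have hL := integral_abs_sub_eq_integral_max_sub_integral_min hf hg
  have hsum := integral_min_add_integral_max hf hg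
  have hlow := integral_min_le_integral_sqrt_mul hf0 hg0 hf hg
  have hup := sq_integral_sqrt_mul_le hf0 hg0 hf hg
  rw [hf1, hg1] at hsum
  constructor <;> nlinarith [sq_nonneg (∫ a, min (f a) (g a) ∂μ)]

end HellingerAffinity

section Gaussian

open scoped NNReal

lemma gaussianPDFReal_mul_gaussianPDFReal (m₁ m₂ : ℝ) (v : ℝ≥0) (y : ℝ) :
    gaussianPDFReal m₁ v y * gaussianPDFReal m₂ v y
      = (exp (-(m₁ - m₂) ^ 2 / (8 * v)) * gaussianPDFReal ((m₁ + m₂) / 2) v y) ^ 2 := by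
  have key : exp (-(y - m₁) ^ 2 / (2 * v)) * exp (-(y - m₂) ^ 2 / (2 * v))
      = exp (-(m₁ - m₂) ^ 2 / (8 * v)) ^ 2 * exp (-(y - (m₁ + m₂) / 2) ^ 2 / (2 * v)) ^ 2 := by
    rw [← exp_add, ← exp_nat_mul, ← exp_nat_mul, ← exp_add]
    congr 1
    push_cast
    ring
  simp only [gaussianPDFReal]
  linear_combination (√(2 * π * v))⁻¹ ^ 2 * key

variable {ι : Type*} [Fintype ι]

lemma integral_pi_prod_gaussianPDFReal (m : ι → ℝ) {v : ℝ≥0} (hv : v ≠ 0) :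
    ∫ y : ι → ℝ, ∏ i, gaussianPDFReal (m i) v (y i) ∂(Measure.pi fun _ => volume) = 1 := by
  simp [integral_fintype_prod_eq_prod, integral_gaussianPDFReal_eq_one _ hv]

lemma integral_sqrt_pi_prod_gaussianPDFReal_mul (m₁ m₂ : ι → ℝ) {v : ℝ≥0} (hv : v ≠ 0) :
    ∫ y : ι → ℝ, √((∏ i, gaussianPDFReal (m₁ i) v (y i)) * ∏ i, gaussianPDFReal (m₂ i) v (y i))
      ∂(Measure.pi fun _ => volume) = exp (-(∑ i, (m₁ i - m₂ i) ^ 2) / (8 * v)) := by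
  have hpt (y : ι → ℝ) :
      √((∏ i, gaussianPDFReal (m₁ i) v (y i)) * ∏ i, gaussianPDFReal (m₂ i) v (y i))
        = ∏ i, exp (-(m₁ i - m₂ i) ^ 2 / (8 * v)) *
            gaussianPDFReal ((m₁ i + m₂ i) / 2) v (y i) := by
    rw [← Finset.prod_mul_distrib]
    simp only [gaussianPDFReal_mul_gaussianPDFReal, Finset.prod_pow]
    exact Real.sqrt_sq (Finset.prod_nonneg fun i _ =>
      mul_nonneg (exp_pos _).le (gaussianPDFReal_nonneg _ _ _))
  simp_rw [hpt]
  rw [integral_fintype_prod_eq_prod fun i t =>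
    exp (-(m₁ i - m₂ i) ^ 2 / (8 * v)) * gaussianPDFReal ((m₁ i + m₂ i) / 2) v t]
  simp only [integral_const_mul, integral_gaussianPDFReal_eq_one _ hv, mul_one, ← Real.exp_sum]
  rw [← Finset.sum_neg_distrib, Finset.sum_div]

lemma integral_abs_sub_pi_prod_gaussianPDFReal_bounds (m₁ m₂ : ι → ℝ) {v : ℝ≥0} (hv : v ≠ 0) :
    2 - 2 * exp (-(∑ i, (m₁ i - m₂ i) ^ 2) / (8 * v)) ≤
      ∫ y : ι → ℝ, |(∏ i, gaussianPDFReal (m₁ i) v (y i)) - ∏ i, gaussianPDFReal (m₂ i) v (y i)|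
        ∂(Measure.pi fun _ => volume) ∧
    ∫ y : ι → ℝ, |(∏ i, gaussianPDFReal (m₁ i) v (y i)) - ∏ i, gaussianPDFReal (m₂ i) v (y i)|
        ∂(Measure.pi fun _ => volume) ≤
      2 - exp (-(∑ i, (m₁ i - m₂ i) ^ 2) / (8 * v)) ^ 2 := by
  rw [← integral_sqrt_pi_prod_gaussianPDFReal_mul m₁ m₂ hv]
  exact two_sub_two_mul_affinity_le_integral_abs_sub
    (ae_of_all _ fun y => Finset.prod_nonneg fun i _ => gaussianPDFReal_nonneg _ _ _)
    (ae_of_all _ fun y => Finset.prod_nonneg fun i _ => gaussianPDFReal_nonneg _ _ _)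
    (Integrable.fintype_prod fun i => integrable_gaussianPDFReal _ _)
    (Integrable.fintype_prod fun i => integrable_gaussianPDFReal _ _)
    (integral_pi_prod_gaussianPDFReal m₁ hv) (integral_pi_prod_gaussianPDFReal m₂ hv)

end Gaussian

lemma sum_fin_sq_mul_eq (x : ℕ → ℝ) (b : ℝ) (n : ℕ) :
    ∑ i : Fin n, (b * x i) ^ 2 = (b * √n) ^ 2 * ((∑ i ∈ Finset.range n, x i ^ 2) / n) := by
  rcases Nat.eq_zero_or_pos n with rfl | hn
  · simp
  rw [Fin.sum_univ_eq_sum_range (fun i => (b * x i) ^ 2), mul_pow, Real.sq_sqrt n.cast_nonneg]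
  simp_rw [mul_pow]
  rw [← Finset.mul_sum]
  field_simp

theorem stmt_10 (x : ℕ → ℝ)
    (hS : ∃ r R : ℝ, 0 < r ∧ r < R ∧ ∃ n₀ : ℕ, ∀ n > n₀,
      r < (∑ i ∈ Finset.range n, (x i) ^ 2) / n ∧
      (∑ i ∈ Finset.range n, (x i) ^ 2) / n < R)
    (β : ℕ → ℝ)
    (hβ : ∃ r R : ℝ, 0 < r ∧ r < R ∧ ∃ n₀ : ℕ, ∀ n > n₀,
      r < β n * Real.sqrt n ∧ β n * Real.sqrt n < R) :
    ∃ a b : ℝ, 0 < a ∧ b < 2 ∧ ∃ n₁ : ℕ, ∀ n > n₁,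
      a ≤ (∫ y : Fin n → ℝ,
          |(∏ i : Fin n, gaussianPDFReal 0 1 (y i)) -
            ∏ i : Fin n, gaussianPDFReal (β n * x i.val) 1 (y i)|
          ∂(Measure.pi fun _ => volume)) ∧
      (∫ y : Fin n → ℝ,
          |(∏ i : Fin n, gaussianPDFReal 0 1 (y i)) -
            ∏ i : Fin n, gaussianPDFReal (β n * x i.val) 1 (y i)|
          ∂(Measure.pi fun _ => volume)) ≤ b := by
  obtain ⟨rS, RS, hrS, -, nS, hnS⟩ := hS
  obtain ⟨rβ, Rβ, hrβ, -, nβ, hnβ⟩ := hβ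
  refine ⟨2 - 2 * exp (-(rβ ^ 2 * rS) / 8), 2 - exp (-(Rβ ^ 2 * RS) / 8) ^ 2, ?_, ?_, max nS nβ,
    fun n hn => ?_⟩
  · have : -(rβ ^ 2 * rS) / 8 < 0 := by have := mul_pos (pow_pos hrβ 2) hrS; linarith
    linarith [Real.exp_lt_one_iff.2 this]
  · linarith [pow_pos (exp_pos (-(Rβ ^ 2 * RS) / 8)) 2]
  obtain ⟨hS₁, hS₂⟩ := hnS n (lt_of_le_of_lt (le_max_left _ _) hn)
  obtain ⟨hβ₁, hβ₂⟩ := hnβ n (lt_of_le_of_lt (le_max_right _ _) hn)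
  obtain ⟨hlow, hup⟩ := integral_abs_sub_pi_prod_gaussianPDFReal_bounds (fun _ => 0)
    (fun i : Fin n => β n * x i) one_ne_zero
  simp only [zero_sub, neg_sq, NNReal.coe_one, mul_one, sum_fin_sq_mul_eq] at hlow hup
  set S := (β n * √n) ^ 2 * ((∑ i ∈ Finset.range n, x i ^ 2) / n)
  have hS_low : rβ ^ 2 * rS < S :=
    mul_lt_mul'' (pow_lt_pow_left₀ hβ₁ hrβ.le two_ne_zero) hS₁ (by positivity) hrS.le
  have hS_up : S < Rβ ^ 2 * RS :=
    mul_lt_mul'' (pow_lt_pow_left₀ hβ₂ (hrβ.trans hβ₁).le two_ne_zero) hS₂ (by positivity)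
      (hrS.trans hS₁).le
  constructor
  · linarith [exp_lt_exp.2 (by linarith : -S / 8 < -(rβ ^ 2 * rS) / 8)]
  · have : exp (-(Rβ ^ 2 * RS) / 8) ^ 2 < exp (-S / 8) ^ 2 := by gcongr
    linarith
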